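/- Uniqueness of the balanced flow: a transshipment problem (G, d, λ) with no fatal cut has exactly one weakly feasible flow x* whose nonincreasingly sorted ratio vector (x*_e/λ_e, e ∈ E) is lexicographically minimal among all weakly feasible flows. -/

import Mathlib

open Finset

/-- A nonnegative flow satisfying the conservation law `A_G x = d`:
at each node the total flow out minus the total flow in equals `d v`. -/
def WeaklyFeasible {V E : Type*} [Fintype E] [DecidableEq V]
    (tail head : E → V) (d : V → ℝ) (x : E → ℝ) : Prop :=
  (∀ e, 0 ≤ x e) ∧
  ∀ v : V, (∑ e ∈ Finset.univ.filter (fun e => tail e = v), x e)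
      - (∑ e ∈ Finset.univ.filter (fun e => head e = v), x e) = d v

/-- No fatal cut: every cut with no forward arc has nonpositive deficiency. -/
def NoFatalCut {V E : Type*} [Fintype V] [Fintype E] [DecidableEq V]
    (tail head : E → V) (d : V → ℝ) : Prop :=
  ∀ S : Finset V, S.Nonempty → Sᶜ.Nonempty →
    Finset.univ.filter (fun e => tail e ∈ S ∧ head e ∉ S) = ∅ → ∑ v ∈ S, d v ≤ 0

/-- The ratios `x e / lam e`, sorted in nonincreasing order. -/
noncomputable def sortedRatiosDesc {E : Type*} [Fintype E] (lam x : E → ℝ) : List ℝ :=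
  ((Finset.univ.val.map (fun e => x e / lam e)).sort (· ≤ ·)).reverse

set_option linter.unusedSectionVars false




namespace BalancedFlow

/-- sorted-descending list of a multiset -/
noncomputable def sortedDesc (m : Multiset ℝ) : List ℝ := (m.sort (· ≤ ·)).reverse

lemma sortedDesc_sorted (m : Multiset ℝ) : (sortedDesc m).Pairwise (fun a b => b ≤ a) := by
  unfold sortedDesc
  rw [List.pairwise_reverse]
  exact Multiset.pairwise_sort m _

lemma sortedDesc_coe (m : Multiset ℝ) : (((sortedDesc m : List ℝ) : Multiset ℝ)) = m := by
  unfold sortedDesc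
  rw [Multiset.coe_reverse, Multiset.sort_eq]

lemma sortedDesc_length (m : Multiset ℝ) : (sortedDesc m).length = Multiset.card m := by
  have := congrArg Multiset.card (sortedDesc_coe m)
  simpa using this

lemma sortedDesc_perm (m : Multiset ℝ) (l : List ℝ) (h : (l : Multiset ℝ) = m)
    (hs : l.Pairwise (fun a b => b ≤ a)) : sortedDesc m = l := by
  have hperm : List.Perm (sortedDesc m) l := by
    rw [← Multiset.coe_eq_coe, sortedDesc_coe, h]
  have : IsAntisymm ℝ (fun a b => b ≤ a) := ⟨fun a b h1 h2 => le_antisymm h2 h1⟩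
  have : IsTrans ℝ (fun a b => b ≤ a) := ⟨fun a b c h1 h2 => le_trans h2 h1⟩
  exact List.Perm.eq_of_pairwise' (sortedDesc_sorted m) hs hperm

end BalancedFlow

namespace BalancedFlow

lemma mem_sortedDesc {m : Multiset ℝ} {b : ℝ} : b ∈ sortedDesc m ↔ b ∈ m := by
  rw [← Multiset.mem_coe, sortedDesc_coe]

lemma sum_le_take (l : List ℝ) (hl : l.Pairwise (fun a b => b ≤ a)) :
    ∀ t : Multiset ℝ, t ≤ (l : Multiset ℝ) → t.sum ≤ (l.take (Multiset.card t)).sum := by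
  induction l with
  | nil =>
    intro t ht
    have : t = 0 := by simpa [Multiset.le_zero] using ht
    simp [this]
  | cons a l ih =>
    intro t ht
    have hl' : l.Pairwise (fun a b => b ≤ a) := (List.pairwise_cons.mp hl).2
    have hal : ∀ b ∈ l, b ≤ a := (List.pairwise_cons.mp hl).1
    by_cases ha : a ∈ t
    · have ht' : t = a ::ₘ t.erase a := (Multiset.cons_erase ha).symm
      have h1 : t.erase a ≤ (l : Multiset ℝ) := by
        have := Multiset.erase_le_erase a ht
        simpa using this
      have := ih hl' (t.erase a) h1
      rw [ht']
      simp only [Multiset.sum_cons, Multiset.card_cons, List.take_succ_cons, List.sum_cons]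
      linarith
    · have h1 : t ≤ (l : Multiset ℝ) := by
        rw [Multiset.le_iff_count]
        intro b
        have hc := Multiset.le_iff_count.mp ht b
        rcases eq_or_ne b a with rfl | hb
        · simp [Multiset.count_eq_zero_of_notMem ha]
        · rw [← Multiset.cons_coe, Multiset.count_cons_of_ne hb] at hc
          exact hc
      have h2 := ih hl' t h1
      refine h2.trans ?_
      have hk : Multiset.card t ≤ l.length := by
        have := Multiset.card_le_card h1
        simpa using this
      rcases Nat.eq_zero_or_pos (Multiset.card t) with h0 | hpos
      · simp [h0]
      obtain ⟨k, hk1⟩ : ∃ k, Multiset.card t = k + 1 :=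
        ⟨Multiset.card t - 1, by omega⟩
      rw [hk1, List.take_succ_cons, List.sum_cons]
      rw [hk1] at hk
      rcases Nat.lt_or_ge k l.length with hkl | hkl
      · have hs := List.sum_take_succ l k hkl
        have : l[k] ≤ a := by
          simpa using hal _ (List.getElem_mem (l := l) (n := k) (by omega))
        rw [hs]
        linarith
      · omega

lemma sortedDesc_replicate_add (k : ℕ) (M : ℝ) (m : Multiset ℝ) (hm : ∀ b ∈ m, b ≤ M) :
    sortedDesc (Multiset.replicate k M + m) = List.replicate k M ++ sortedDesc m := by
  refine (sortedDesc_perm _ _ ?_ ?_)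
  · conv_rhs => rw [← sortedDesc_coe m]
    rw [← Multiset.coe_replicate, ← Multiset.coe_add]
  · rw [List.pairwise_append]
    refine ⟨?_, sortedDesc_sorted m, ?_⟩
    · apply List.pairwise_replicate.mpr
      simp
    · intro x hx y hy
      have hxM : x = M := by simpa using List.eq_of_mem_replicate hx
      have : y ≤ M := hm y (mem_sortedDesc.mp hy)
      simpa [hxM] using this

lemma multiset_decomp (m : Multiset ℝ) (M : ℝ) :
    m = Multiset.replicate (m.count M) M + m.filter (fun b => ¬ b = M) := by
  conv_lhs => rw [← Multiset.filter_add_not (fun b => b = M) m]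
  congr 1
  simpa using Multiset.filter_eq' m M

lemma lex_append_left (p : List ℝ) {u v : List ℝ} (h : List.Lex (· < ·) u v) :
    List.Lex (· < ·) (p ++ u) (p ++ v) := by
  induction p with
  | nil => simpa using h
  | cons a p ih => exact List.Lex.cons ih

lemma lex_total : ∀ (l1 l2 : List ℝ), l1.length = l2.length →
    ¬ List.Lex (· < ·) l1 l2 → ¬ List.Lex (· < ·) l2 l1 → l1 = l2 := by
  intro l1
  induction l1 with
  | nil => intro l2 hlen _ _; cases l2 with
    | nil => rfl
    | cons b t => simp at hlen
  | cons a t1 ih =>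
    intro l2 hlen h1 h2
    cases l2 with
    | nil => simp at hlen
    | cons b t2 =>
      rcases lt_trichotomy a b with hab | hab | hab
      · exact absurd (List.Lex.rel hab) h1
      · subst hab
        have := ih t2 (by simpa using hlen) (fun h => h1 (List.Lex.cons h))
          (fun h => h2 (List.Lex.cons h))
        rw [this]
      · exact absurd (List.Lex.rel hab) h2

lemma lex_decomp : ∀ {l1 l2 : List ℝ}, List.Lex (· < ·) l1 l2 → l1.length = l2.length →
    ∃ p a b t1 t2, l1 = p ++ a :: t1 ∧ l2 = p ++ b :: t2 ∧ a < b := by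
  intro l1 l2 h
  induction h with
  | nil => intro hlen; simp at hlen
  | @rel a l1 b l2 hab => intro _; exact ⟨[], a, b, l1, l2, rfl, rfl, hab⟩
  | @cons a l1 l2 h ih =>
    intro hlen
    obtain ⟨p, x, y, t1, t2, e1, e2, hxy⟩ := ih (by simpa using hlen)
    exact ⟨a :: p, x, y, t1, t2, by simp [e1], by simp [e2], hxy⟩

lemma exists_le_of_le_map {α : Type*} {f : α → ℝ} :
    ∀ {s : Multiset α} {t : Multiset ℝ}, t ≤ s.map f → ∃ u, u ≤ s ∧ u.map f = t := by
  classical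
  intro s
  induction s using Multiset.induction with
  | empty => intro t ht; exact ⟨0, le_rfl, by simp [(by simpa [Multiset.le_zero] using ht : t = 0)]⟩
  | cons x s ih =>
    intro t ht
    rw [Multiset.map_cons] at ht
    by_cases hx : f x ∈ t
    · have h1 : t.erase (f x) ≤ s.map f := by
        have := Multiset.erase_le_erase (f x) ht
        simpa using this
      obtain ⟨u, hu, hmap⟩ := ih h1
      refine ⟨x ::ₘ u, Multiset.cons_le_cons x hu, ?_⟩
      rw [Multiset.map_cons, hmap]
      exact Multiset.cons_erase hx
    · have h1 : t ≤ s.map f := by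
        rw [Multiset.le_iff_count]
        intro b
        have hc := Multiset.le_iff_count.mp ht b
        rcases eq_or_ne b (f x) with rfl | hb
        · simp [Multiset.count_eq_zero_of_notMem hx]
        · rwa [Multiset.count_cons_of_ne hb] at hc
      obtain ⟨u, hu, hmap⟩ := ih h1
      exact ⟨u, hu.trans (Multiset.le_cons_self _ _), hmap⟩

end BalancedFlow

namespace BalancedFlow

noncomputable local instance : DecidableEq ℝ := Classical.decEq ℝ

lemma sorted_head_ge {l : List ℝ} (hs : l.Pairwise (fun a b => b ≤ a)) (hl : l ≠ [])
    {b : ℝ} (hb : b ∈ l) : b ≤ l.headI := by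
  cases l with
  | nil => exact absurd rfl hl
  | cons a t =>
    rcases List.mem_cons.mp hb with rfl | hbt
    · simp
    · simpa using (List.pairwise_cons.mp hs).1 b hbt

lemma headI_mem {l : List ℝ} (hl : l ≠ []) : l.headI ∈ l := by
  cases l with
  | nil => exact absurd rfl hl
  | cons a t => simp

private noncomputable def avg : ℝ × ℝ → ℝ := fun pr => (pr.1 + pr.2) / 2

lemma avg_lex_aux : ∀ (n : ℕ) (P : Multiset (ℝ × ℝ)), Multiset.card P = n →
    P.map Prod.fst = P.map Prod.snd → (∃ pr ∈ P, pr.1 ≠ pr.2) →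
    List.Lex (· < ·) (sortedDesc (P.map avg)) (sortedDesc (P.map Prod.fst)) := by
  intro n
  induction n using Nat.strong_induction_on with
  | _ n ih =>
    intro P hcard heq hne
    obtain ⟨pr0, hpr0, hne0⟩ := hne
    set mf := P.map Prod.fst with hmf
    set mavg := P.map avg with hmavg
    have hlne : sortedDesc mf ≠ [] := by
      intro h
      have hc : Multiset.card mf = 0 := by rw [← sortedDesc_length mf, h]; rfl
      rw [hmf, Multiset.card_map] at hc
      rw [Multiset.card_eq_zero.mp hc] at hpr0
      simp at hpr0
    set M := (sortedDesc mf).headI with hM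
    have hMmax : ∀ b ∈ mf, b ≤ M :=
      fun b hb => sorted_head_ge (sortedDesc_sorted mf) hlne (mem_sortedDesc.mpr hb)
    have hMmem : M ∈ mf := mem_sortedDesc.mp (headI_mem hlne)
    have hfst : ∀ pr ∈ P, pr.1 ≤ M := fun pr hpr => hMmax _ (Multiset.mem_map_of_mem _ hpr)
    have hsnd : ∀ pr ∈ P, pr.2 ≤ M := by
      intro pr hpr
      apply hMmax
      rw [heq]
      exact Multiset.mem_map_of_mem _ hpr
    have havgle : ∀ pr ∈ P, avg pr ≤ M := by
      intro pr hpr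
      have h1 := hfst pr hpr
      have h2 := hsnd pr hpr
      simp only [avg]
      linarith
    have havgM : ∀ pr ∈ P, (M = avg pr ↔ (pr.1 = M ∧ pr.2 = M)) := by
      intro pr hpr
      have h1 := hfst pr hpr
      have h2 := hsnd pr hpr
      simp only [avg]
      constructor
      · intro h; constructor <;> linarith
      · intro ⟨e1, e2⟩; rw [e1, e2]; ring
    set Q := P.filter (fun pr => pr.1 = M ∧ pr.2 = M) with hQ
    set R := P.filter (fun pr => ¬(pr.1 = M ∧ pr.2 = M)) with hR
    have hQR : Q + R = P := Multiset.filter_add_not _ P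
    set k := mf.count M with hk
    set a := mavg.count M with ha
    have hQcard : Multiset.card Q = a := by
      rw [ha, hmavg, Multiset.count_map]
      congr 1
      exact (Multiset.filter_congr (fun pr hpr => (havgM pr hpr))).symm
    have hkcard : k = Multiset.card (P.filter (fun pr => M = pr.1)) := by
      rw [hk, hmf, Multiset.count_map]
    have hak : a ≤ k := by
      rw [← hQcard, hkcard]
      apply Multiset.card_le_card
      have : Q = (P.filter (fun pr => M = pr.1)).filter (fun pr => pr.1 = M ∧ pr.2 = M) := by
        rw [Multiset.filter_filter]
        rw [hQ]
        apply Multiset.filter_congr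
        intro pr _
        constructor
        · intro ⟨h1, h2⟩; exact ⟨⟨h1, h2⟩, h1.symm⟩
        · intro ⟨h1, _⟩; exact h1
      rw [this]
      exact Multiset.filter_le _ _
    have hkpos : 1 ≤ k := by
      rw [hk]
      exact Multiset.count_pos.mpr hMmem
    -- decompositions
    set mf' := mf.filter (fun b => ¬ b = M) with hmf'
    set mavg' := mavg.filter (fun b => ¬ b = M) with hmavg'
    have hmf'le : ∀ b ∈ mf', b < M := by
      intro b hb
      obtain ⟨h1, h2⟩ := Multiset.mem_filter.mp hb
      exact lt_of_le_of_ne (hMmax b h1) h2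
    have havg'le : ∀ b ∈ mavg', b < M := by
      intro b hb
      obtain ⟨h1, h2⟩ := Multiset.mem_filter.mp hb
      obtain ⟨pr, hpr, rfl⟩ := Multiset.mem_map.mp h1
      exact lt_of_le_of_ne (havgle pr hpr) h2
    have hcount_avg : Multiset.card mavg = Multiset.card P := by rw [hmavg]; simp
    have lf_eq : sortedDesc mf = List.replicate k M ++ sortedDesc mf' := by
      conv_lhs => rw [multiset_decomp mf M]
      exact sortedDesc_replicate_add _ _ _ (fun b hb => le_of_lt (hmf'le b hb))
    have lavg_eq : sortedDesc mavg = List.replicate a M ++ sortedDesc mavg' := by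
      conv_lhs => rw [multiset_decomp mavg M]
      exact sortedDesc_replicate_add _ _ _ (fun b hb => le_of_lt (havg'le b hb))
    rw [lavg_eq, lf_eq]
    rcases lt_or_eq_of_le hak with hlt | heqak
    · -- case a < k
      have : List.replicate k M = List.replicate a M ++ List.replicate (k - a) M := by
        rw [← List.replicate_add]
        congr 1
        omega
      rw [this, List.append_assoc]
      apply lex_append_left
      obtain ⟨j, hj⟩ : ∃ j, k - a = j + 1 := ⟨k - a - 1, by omega⟩
      rw [hj, List.replicate_succ, List.cons_append]
      cases hcase : sortedDesc mavg' with
      | nil => exact List.Lex.nil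
      | cons c t =>
        apply List.Lex.rel
        apply havg'le
        apply mem_sortedDesc.mp
        rw [hcase]
        exact List.mem_cons_self
    · -- case a = k
      have hQfst : Q.map Prod.fst = Multiset.replicate a M := by
        rw [Multiset.eq_replicate]
        constructor
        · rw [Multiset.card_map]; exact hQcard
        · intro b hb
          obtain ⟨pr, hpr, rfl⟩ := Multiset.mem_map.mp hb
          exact (Multiset.mem_filter.mp hpr).2.1
      have hQsnd : Q.map Prod.snd = Multiset.replicate a M := by
        rw [Multiset.eq_replicate]
        constructor
        · rw [Multiset.card_map]; exact hQcard
        · intro b hb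
          obtain ⟨pr, hpr, rfl⟩ := Multiset.mem_map.mp hb
          exact (Multiset.mem_filter.mp hpr).2.2
      have hQavg : Q.map avg = Multiset.replicate a M := by
        rw [Multiset.eq_replicate]
        constructor
        · rw [Multiset.card_map]; exact hQcard
        · intro b hb
          obtain ⟨pr, hpr, rfl⟩ := Multiset.mem_map.mp hb
          obtain ⟨h1, h2⟩ := (Multiset.mem_filter.mp hpr).2
          simp only [avg]; rw [h1, h2]; ring
      have hmf_split : mf = Multiset.replicate a M + R.map Prod.fst := by
        rw [hmf, ← hQR, Multiset.map_add, hQfst]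
      have hmavg_split : mavg = Multiset.replicate a M + R.map avg := by
        rw [hmavg, ← hQR, Multiset.map_add, hQavg]
      have hsnd_split : P.map Prod.snd = Multiset.replicate a M + R.map Prod.snd := by
        rw [← hQR, Multiset.map_add, hQsnd]
      have hcountR : (R.map Prod.fst).count M = 0 := by
        have : mf.count M = a := by rw [heqak, hk]
        rw [hmf_split, Multiset.count_add, Multiset.count_replicate_self] at this
        omega
      have hcountRavg : (R.map avg).count M = 0 := by
        have : mavg.count M = a := ha.symm
        rw [hmavg_split, Multiset.count_add, Multiset.count_replicate_self] at this
        omega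
      have hmf'R : mf' = R.map Prod.fst := by
        rw [hmf', hmf_split, Multiset.filter_add]
        rw [Multiset.filter_eq_nil.mpr, Multiset.filter_eq_self.mpr, zero_add]
        · intro b hb
          exact Multiset.count_eq_zero.mp hcountR ∘ (fun h => h ▸ hb)
        · intro b hb
          simp only [Multiset.eq_of_mem_replicate hb, not_not]
      have hmavg'R : mavg' = R.map avg := by
        rw [hmavg', hmavg_split, Multiset.filter_add]
        rw [Multiset.filter_eq_nil.mpr, Multiset.filter_eq_self.mpr, zero_add]
        · intro b hb
          exact Multiset.count_eq_zero.mp hcountRavg ∘ (fun h => h ▸ hb)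
        · intro b hb
          simp only [Multiset.eq_of_mem_replicate hb, not_not]
      have heqR : R.map Prod.fst = R.map Prod.snd := by
        have := heq
        rw [hmf_split, hsnd_split] at this
        exact add_left_cancel this
      have hneR : ∃ pr ∈ R, pr.1 ≠ pr.2 := by
        refine ⟨pr0, ?_, hne0⟩
        rw [← hQR] at hpr0
        rcases Multiset.mem_add.mp hpr0 with h | h
        · obtain ⟨h1, h2⟩ := (Multiset.mem_filter.mp h).2
          exact absurd (h1.trans h2.symm) hne0
        · exact h
      have hcardR : Multiset.card R < n := by
        have : Multiset.card Q + Multiset.card R = n := by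
          rw [← Multiset.card_add, hQR, hcard]
        omega
      have hIH := ih (Multiset.card R) hcardR R rfl heqR hneR
      rw [← heqak, hmf'R, hmavg'R]
      exact lex_append_left _ hIH

lemma avg_lex (P : Multiset (ℝ × ℝ))
    (heq : P.map Prod.fst = P.map Prod.snd) (hne : ∃ pr ∈ P, pr.1 ≠ pr.2) :
    List.Lex (· < ·) (sortedDesc (P.map (fun pr => (pr.1 + pr.2) / 2)))
      (sortedDesc (P.map Prod.fst)) :=
  avg_lex_aux (Multiset.card P) P rfl heq hne

end BalancedFlow

namespace BalancedFlow

variable {V E : Type*} [Fintype V] [DecidableEq V] [Fintype E]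

/-- incidence vector of edge `e` -/
noncomputable def inc (tail head : E → V) (e : E) : V → ℝ :=
  fun v => (if tail e = v then 1 else 0) - (if head e = v then 1 else 0)

lemma div_eq (tail head : E → V) (x : E → ℝ) (v : V) :
    (∑ e ∈ univ.filter (fun e => tail e = v), x e)
      - (∑ e ∈ univ.filter (fun e => head e = v), x e)
    = ∑ e, x e * inc tail head e v := by
  simp only [inc, mul_sub, mul_ite, mul_one, mul_zero]
  rw [Finset.sum_sub_distrib, Finset.sum_filter, Finset.sum_filter]

lemma wf_iff (tail head : E → V) (d : V → ℝ) (x : E → ℝ) :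
    WeaklyFeasible tail head d x ↔
      ((∀ e, 0 ≤ x e) ∧ d = ∑ e, x e • inc tail head e) := by
  unfold WeaklyFeasible
  refine and_congr Iff.rfl ?_
  constructor
  · intro h
    funext v
    rw [← h v, div_eq]
    rw [Finset.sum_apply]
    simp [Pi.smul_apply, smul_eq_mul]
  · intro h v
    rw [div_eq, h]
    rw [Finset.sum_apply]
    simp [Pi.smul_apply, smul_eq_mul]

/-- the cone of netflows of nonnegative flows -/
noncomputable def flowCone (tail head : E → V) : Set (V → ℝ) :=
  {z | ∃ x : E → ℝ, (∀ e, 0 ≤ x e) ∧ z = ∑ e, x e • inc tail head e}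

lemma flowCone_convex (tail head : E → V) : Convex ℝ (flowCone tail head) := by
  rintro z1 ⟨x1, hx1, rfl⟩ z2 ⟨x2, hx2, rfl⟩ a b ha hb _
  refine ⟨fun e => a * x1 e + b * x2 e,
    fun e => add_nonneg (mul_nonneg ha (hx1 e)) (mul_nonneg hb (hx2 e)), ?_⟩
  rw [Finset.smul_sum, Finset.smul_sum, ← Finset.sum_add_distrib]
  congr 1
  funext e
  rw [add_smul, smul_smul, smul_smul]

lemma flowCone_smul (tail head : E → V) {z : V → ℝ} (hz : z ∈ flowCone tail head)
    {t : ℝ} (ht : 0 ≤ t) : t • z ∈ flowCone tail head := by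
  obtain ⟨x, hx, rfl⟩ := hz
  refine ⟨fun e => t * x e, fun e => mul_nonneg ht (hx e), ?_⟩
  rw [Finset.smul_sum]
  congr 1
  funext e
  rw [smul_smul]

/-- the cone over an index subset, as image of the nonnegative orthant -/
noncomputable def coneMap (tail head : E → V) (B : Finset E) :
    ({e // e ∈ B} → ℝ) →ₗ[ℝ] (V → ℝ) where
  toFun := fun c => ∑ i : B, c i • inc tail head (i : E)
  map_add' := fun c1 c2 => by
    simp only [Pi.add_apply, add_smul, Finset.sum_add_distrib]
  map_smul' := fun t c => by
    simp only [Pi.smul_apply, RingHom.id_apply, Finset.smul_sum, smul_smul, smul_eq_mul]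

lemma coneOn_isClosed (tail head : E → V) (B : Finset E)
    (hB : LinearIndependent ℝ (fun e : B => inc tail head (e : E))) :
    IsClosed (coneMap tail head B '' {c | ∀ i, 0 ≤ c i}) := by
  have hinj : Function.Injective (coneMap tail head B) := by
    rw [← LinearMap.ker_eq_bot]
    rw [LinearMap.ker_eq_bot']
    intro c hc
    have := Fintype.linearIndependent_iff.mp hB c hc
    funext i
    exact this i
  have hemb := LinearMap.isClosedEmbedding_of_injective
    (f := coneMap tail head B) (LinearMap.ker_eq_bot.mpr hinj)
  apply hemb.isClosedMap
  have : {c : {e // e ∈ B} → ℝ | ∀ i, 0 ≤ c i} = ⋂ i, {c | 0 ≤ c i} := by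
    ext c; simp [Set.mem_iInter]
  rw [this]
  exact isClosed_iInter fun i => isClosed_le continuous_const (continuous_apply i)

lemma flowCone_eq_union (tail head : E → V) :
    flowCone tail head = ⋃ B ∈ {B : Finset E |
        LinearIndependent ℝ (fun e : B => inc tail head (e : E))},
      coneMap tail head B '' {c | ∀ i, 0 ≤ c i} := by
  classical
  ext z
  constructor
  · rintro ⟨x, hx, rfl⟩
    -- strong induction on support size
    have main : ∀ (n : ℕ) (x : E → ℝ), (∀ e, 0 ≤ x e) →
        (univ.filter (fun e => x e ≠ 0)).card = n →
        (∑ e, x e • inc tail head e) ∈ ⋃ B ∈ {B : Finset E |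
          LinearIndependent ℝ (fun e : B => inc tail head (e : E))},
          coneMap tail head B '' {c | ∀ i, 0 ≤ c i} := by
      intro n
      induction n using Nat.strong_induction_on with
      | _ n ih =>
        intro x hx hn
        set S := univ.filter (fun e => x e ≠ 0) with hS
        have hxout : ∀ e ∉ S, x e = 0 := by
          intro e he
          by_contra hne
          exact he (Finset.mem_filter.mpr ⟨Finset.mem_univ e, hne⟩)
        have hsum_eq : (∑ e, x e • inc tail head e) = ∑ e ∈ S, x e • inc tail head e := by
          refine (Finset.sum_subset (Finset.subset_univ S) ?_).symm
          intro e _ he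
          rw [hxout e he, zero_smul]
        by_cases hB : LinearIndependent ℝ (fun e : S => inc tail head (e : E))
        · apply Set.mem_biUnion (show S ∈ _ from hB)
          refine ⟨fun i => x i, fun i => hx i, ?_⟩
          rw [hsum_eq]
          exact Finset.sum_coe_sort S (fun e => x e • inc tail head e)
        · obtain ⟨g, hg0, i0, hgi0⟩ := Fintype.not_linearIndependent_iff.mp hB
          -- WLOG some positive coefficient
          obtain ⟨g, hg0, i1, hgi1⟩ :
              ∃ g : S → ℝ, (∑ i : S, g i • inc tail head (i : E)) = 0 ∧ ∃ i, 0 < g i := by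
            rcases lt_or_gt_of_ne hgi0 with h | h
            · refine ⟨fun i => -(g i), ?_, i0, by simpa using neg_pos.mpr h⟩
              have : (∑ i : {e // e ∈ S}, (-(g i)) • inc tail head (i : E))
                  = -(∑ i : {e // e ∈ S}, g i • inc tail head (i : E)) := by
                rw [← Finset.sum_neg_distrib]
                apply Finset.sum_congr rfl
                intro i _
                rw [neg_smul]
              rw [this, hg0, neg_zero]
            · exact ⟨g, hg0, i0, h⟩
          set T := univ.filter (fun i : {e // e ∈ S} => 0 < g i) with hT
          have hTne : T.Nonempty := ⟨i1, Finset.mem_filter.mpr ⟨Finset.mem_univ _, hgi1⟩⟩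
          obtain ⟨j, hjT, hjmin⟩ := Finset.exists_min_image T (fun i => x i / g i) hTne
          have hjmin' : ∀ i ∈ T, x (j : E) / g j ≤ x (i : E) / g i := hjmin
          have hgj : 0 < g j := (Finset.mem_filter.mp hjT).2
          set τ := x (j : E) / g j with hτ
          have hτ0 : 0 ≤ τ := div_nonneg (hx _) (le_of_lt hgj)
          set gx : E → ℝ := fun e => if h : e ∈ S then g ⟨e, h⟩ else 0 with hgx
          set x' : E → ℝ := fun e => x e - τ * gx e with hx'def
          have hx' : ∀ e, 0 ≤ x' e := by
            intro e
            simp only [hx'def, hgx]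
            by_cases he : e ∈ S
            · rw [dif_pos he]
              rcases le_or_gt (g ⟨e, he⟩) 0 with hge | hge
              · have h1 : τ * g ⟨e, he⟩ ≤ 0 := mul_nonpos_of_nonneg_of_nonpos hτ0 hge
                have h2 := hx e
                linarith
              · have hmem : (⟨e, he⟩ : {a // a ∈ S}) ∈ T :=
                  Finset.mem_filter.mpr ⟨Finset.mem_univ _, hge⟩
                have h3 := hjmin' _ hmem
                rw [le_div_iff₀ hge] at h3
                linarith
            · rw [dif_neg he]
              have := hx e
              linarith
          have hgxsum : (∑ e, gx e • inc tail head e) = 0 := by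
            have h1 : (∑ e, gx e • inc tail head e) = ∑ e ∈ S, gx e • inc tail head e := by
              refine (Finset.sum_subset (Finset.subset_univ S) ?_).symm
              intro e _ he
              simp only [hgx, dif_neg he, zero_smul]
            rw [h1, ← Finset.sum_coe_sort S (fun e => gx e • inc tail head e), ← hg0]
            apply Finset.sum_congr rfl
            intro i _
            simp only [hgx, dif_pos i.2]
          have hsum' : (∑ e, x' e • inc tail head e) = ∑ e, x e • inc tail head e := by
            simp only [hx'def, sub_smul]
            rw [Finset.sum_sub_distrib]
            have h2 : (∑ e, (τ * gx e) • inc tail head e)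
                = τ • ∑ e, gx e • inc tail head e := by
              rw [Finset.smul_sum]
              apply Finset.sum_congr rfl
              intro e _
              rw [smul_smul]
            rw [h2, hgxsum, smul_zero, sub_zero]
          have hx'j : x' (j : E) = 0 := by
            simp only [hx'def, hgx, dif_pos j.2]
            have hj2 : g ⟨(j : E), j.2⟩ = g j := by congr
            rw [hj2, hτ, div_mul_cancel₀ _ (ne_of_gt hgj)]
            ring
          have hsupp : univ.filter (fun e => x' e ≠ 0) ⊆ S.erase (j : E) := by
            intro e he
            have hne : x' e ≠ 0 := (Finset.mem_filter.mp he).2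
            have heS : e ∈ S := by
              by_contra heS
              apply hne
              simp only [hx'def, hgx, dif_neg heS]
              rw [hxout e heS]
              ring
            refine Finset.mem_erase.mpr ⟨?_, heS⟩
            intro hej
            apply hne
            rw [hej]
            exact hx'j
          have hcard : (univ.filter (fun e => x' e ≠ 0)).card < n := by
            calc (univ.filter (fun e => x' e ≠ 0)).card
                ≤ (S.erase (j : E)).card := Finset.card_le_card hsupp
              _ < S.card := Finset.card_erase_lt_of_mem j.2
              _ = n := hn
          rw [← hsum']
          exact ih _ hcard x' hx' rfl
    exact main _ x hx rfl
  · intro hz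
    simp only [Set.mem_iUnion, Set.mem_image, Set.mem_setOf_eq] at hz
    obtain ⟨B, hB, c, hc, rfl⟩ := hz
    refine ⟨fun e => if h : e ∈ B then c ⟨e, h⟩ else 0, ?_, ?_⟩
    · intro e
      by_cases h : e ∈ B
      · simpa [dif_pos h] using hc ⟨e, h⟩
      · simp [dif_neg h]
    · show coneMap tail head B c = _
      rw [show (∑ e, (if h : e ∈ B then c ⟨e, h⟩ else 0) • inc tail head e)
          = ∑ e ∈ B, (if h : e ∈ B then c ⟨e, h⟩ else 0) • inc tail head e from
        (Finset.sum_subset (Finset.subset_univ B) (by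
          intro e _ he
          rw [dif_neg he, zero_smul])).symm]
      rw [← Finset.sum_attach B
        (fun e => (if h : e ∈ B then c ⟨e, h⟩ else 0) • inc tail head e)]
      apply Finset.sum_congr rfl
      intro i _
      rw [dif_pos i.2]

lemma flowCone_isClosed (tail head : E → V) : IsClosed (flowCone tail head) := by
  rw [flowCone_eq_union]
  exact Set.Finite.isClosed_biUnion (Set.toFinite _)
    (fun B hB => coneOn_isClosed tail head B hB)

end BalancedFlow

namespace BalancedFlow

variable {V E : Type*} [Fintype V] [DecidableEq V] [Fintype E]

lemma cut_bound (tail head : E → V) (d : V → ℝ) (hd : ∑ v, d v = 0)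
    (hnf : NoFatalCut tail head d) (y : V → ℝ)
    (hy : ∀ e, y (tail e) ≤ y (head e)) : ∑ v, d v * y v ≤ 0 := by
  classical
  have main : ∀ (n : ℕ) (y : V → ℝ), (∀ e, y (tail e) ≤ y (head e)) →
      (univ.image y).card = n → ∑ v, d v * y v ≤ 0 := by
    intro n
    induction n using Nat.strong_induction_on with
    | _ n ih =>
      intro y hy hn
      rcases le_or_gt (univ.image y).card 1 with hc1 | hc2
      · -- y is constant
        rcases isEmpty_or_nonempty V with hV | hV
        · simp
        · obtain ⟨v0⟩ := hV
          have hconst : ∀ v, y v = y v0 := by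
            intro v
            exact Finset.card_le_one.mp hc1 _ (Finset.mem_image_of_mem y (mem_univ v))
              _ (Finset.mem_image_of_mem y (mem_univ v0))
          apply le_of_eq
          calc ∑ v, d v * y v = ∑ v, d v * y v0 := by
                apply Finset.sum_congr rfl; intro v _; rw [hconst v]
            _ = (∑ v, d v) * y v0 := by rw [Finset.sum_mul]
            _ = 0 := by rw [hd, zero_mul]
      · set I := univ.image y with hI
        have hIne : I.Nonempty := Finset.card_pos.mp (by omega)
        set M := I.max' hIne with hM
        have hI'ne : (I.erase M).Nonempty := by
          apply Finset.card_pos.mp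
          rw [Finset.card_erase_of_mem (I.max'_mem hIne)]
          omega
        set M' := (I.erase M).max' hI'ne with hM'
        have hM'I : M' ∈ I := Finset.mem_of_mem_erase ((I.erase M).max'_mem hI'ne)
        have hM'M : M' < M := by
          have h1 : M' ≤ M := I.le_max' _ hM'I
          have h2 : M' ≠ M := Finset.ne_of_mem_erase ((I.erase M).max'_mem hI'ne)
          exact lt_of_le_of_ne h1 h2
        have hyleM : ∀ v, y v ≤ M := fun v =>
          I.le_max' _ (Finset.mem_image_of_mem y (mem_univ v))
        have hyM' : ∀ v, y v ≠ M → y v ≤ M' := by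
          intro v hv
          apply (I.erase M).le_max'
          exact Finset.mem_erase.mpr ⟨hv, Finset.mem_image_of_mem y (mem_univ v)⟩
        set y' : V → ℝ := fun v => min (y v) M' with hy'def
        have hy' : ∀ e, y' (tail e) ≤ y' (head e) := by
          intro e
          simp only [hy'def]
          exact min_le_min (hy e) le_rfl
        have himage : univ.image y' ⊆ I.erase M := by
          intro b hb
          obtain ⟨v, _, rfl⟩ := Finset.mem_image.mp hb
          simp only [hy'def]
          rcases eq_or_ne (y v) M with hvM | hvM
          · rw [hvM, min_eq_right (le_of_lt hM'M)]
            exact (I.erase M).max'_mem hI'ne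
          · rw [min_eq_left (hyM' v hvM)]
            exact Finset.mem_erase.mpr ⟨hvM, Finset.mem_image_of_mem y (mem_univ v)⟩
        have hcard' : (univ.image y').card < n := by
          calc (univ.image y').card ≤ (I.erase M).card := Finset.card_le_card himage
            _ < I.card := Finset.card_erase_lt_of_mem (I.max'_mem hIne)
            _ = n := hn
        have hIH := ih _ hcard' y' hy' rfl
        set S := univ.filter (fun v => y v = M) with hS
        have hsplit : ∑ v, d v * y v = ∑ v, d v * y' v + (M - M') * ∑ v ∈ S, d v := by
          have hpt : ∀ v, d v * y v - d v * y' v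
              = if y v = M then d v * (M - M') else 0 := by
            intro v
            simp only [hy'def]
            rcases eq_or_ne (y v) M with hvM | hvM
            · rw [if_pos hvM, hvM, min_eq_right (le_of_lt hM'M)]
              ring
            · rw [if_neg hvM, min_eq_left (hyM' v hvM)]
              ring
          have h1 : ∑ v, (d v * y v - d v * y' v) = ∑ v ∈ S, d v * (M - M') := by
            rw [Finset.sum_congr rfl (fun v _ => hpt v), ← Finset.sum_filter]
          rw [Finset.sum_sub_distrib] at h1
          have h2 : ∑ v ∈ S, d v * (M - M') = (M - M') * ∑ v ∈ S, d v := by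
            rw [← Finset.sum_mul, mul_comm]
          linarith
        have hSd : ∑ v ∈ S, d v ≤ 0 := by
          obtain ⟨v, _, hvM⟩ := Finset.mem_image.mp (I.max'_mem hIne)
          obtain ⟨w, _, hwM'⟩ := Finset.mem_image.mp hM'I
          apply hnf S ⟨v, Finset.mem_filter.mpr ⟨mem_univ v, hvM⟩⟩
          · refine ⟨w, Finset.mem_compl.mpr ?_⟩
            intro hw
            have := (Finset.mem_filter.mp hw).2
            rw [hwM'] at this
            exact absurd this (ne_of_lt hM'M)
          · rw [Finset.filter_eq_empty_iff]
            rintro e _ ⟨h1, h2⟩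
            apply h2
            have hyt : y (tail e) = M := (Finset.mem_filter.mp h1).2
            have : y (head e) = M := le_antisymm (hyleM _) (hyt ▸ hy e)
            exact Finset.mem_filter.mpr ⟨mem_univ _, this⟩
        have h3 : (M - M') * (∑ v ∈ S, d v) ≤ 0 := by nlinarith
        linarith
  exact main _ y hy rfl

end BalancedFlow

namespace BalancedFlow

variable {V E : Type*} [Fintype V] [DecidableEq V] [Fintype E]

lemma feasible_exists (tail head : E → V) (d : V → ℝ) (hd : ∑ v, d v = 0)
    (hnf : NoFatalCut tail head d) : ∃ x, WeaklyFeasible tail head d x := by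
  classical
  by_contra hcon
  push_neg at hcon
  have hdC : d ∉ flowCone tail head := by
    rintro ⟨x, hx, hxd⟩
    exact hcon x ((wf_iff tail head d x).mpr ⟨hx, hxd⟩)
  obtain ⟨f, u, hfs, hfd⟩ := geometric_hahn_banach_closed_point
    (flowCone_convex tail head) (flowCone_isClosed tail head) hdC
  have h0 : (0 : V → ℝ) ∈ flowCone tail head :=
    ⟨fun _ => 0, fun _ => le_refl 0, by simp⟩
  have hu : 0 < u := by
    have := hfs 0 h0
    simpa using this
  have hfle : ∀ z ∈ flowCone tail head, f z ≤ 0 := by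
    intro z hz
    by_contra hpos
    push_neg at hpos
    set t := (u + 1) / f z with ht
    have ht0 : 0 < t := div_pos (by linarith) hpos
    have hmem := flowCone_smul tail head hz (le_of_lt ht0)
    have := hfs _ hmem
    rw [map_smul, smul_eq_mul, ht, div_mul_cancel₀ _ (ne_of_gt hpos)] at this
    linarith
  set y : V → ℝ := fun v => f (fun j => if v = j then 1 else 0) with hy
  have hfz : ∀ z : V → ℝ, f z = ∑ v, z v * y v := by
    intro z
    conv_lhs => rw [pi_eq_sum_univ z]
    rw [map_sum]
    apply Finset.sum_congr rfl
    intro v _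
    rw [map_smul, smul_eq_mul]
  have hedge : ∀ e, y (tail e) ≤ y (head e) := by
    intro e
    have hmem : inc tail head e ∈ flowCone tail head := by
      refine ⟨fun e' => if e' = e then 1 else 0, ?_, ?_⟩
      · intro e'
        by_cases h : e' = e <;> simp [h]
      · have : ∀ e', (if e' = e then (1:ℝ) else 0) • inc tail head e'
            = if e' = e then inc tail head e' else 0 := by
          intro e'
          by_cases h : e' = e <;> simp [h]
        rw [Finset.sum_congr rfl (fun e' _ => this e')]
        rw [Finset.sum_ite_eq' univ e (fun e' => inc tail head e')]
        simp
    have h1 := hfle _ hmem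
    rw [hfz] at h1
    have h2 : ∑ v, inc tail head e v * y v = y (tail e) - y (head e) := by
      simp only [inc, sub_mul, ite_mul, one_mul, zero_mul]
      rw [Finset.sum_sub_distrib]
      rw [Finset.sum_ite_eq univ (tail e) y, Finset.sum_ite_eq univ (head e) y]
      simp
    rw [h2] at h1
    linarith
  have hfd' : 0 < ∑ v, d v * y v := by
    rw [← hfz]
    linarith
  have := cut_bound tail head d hd hnf y hedge
  linarith

end BalancedFlow

namespace BalancedFlow

variable {E : Type*} [Fintype E]

lemma sortedRatiosDesc_eq (lam x : E → ℝ) :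
    sortedRatiosDesc lam x = sortedDesc (univ.val.map (fun e => x e / lam e)) := rfl

lemma sortedRatiosDesc_length (lam x : E → ℝ) :
    (sortedRatiosDesc lam x).length = Fintype.card E := by
  rw [sortedRatiosDesc_eq, sortedDesc_length]
  simp

/-- prefix sums of the sorted ratio vector -/
noncomputable def G (lam x : E → ℝ) (k : ℕ) : ℝ := ((sortedRatiosDesc lam x).take k).sum

lemma G_zero (lam x : E → ℝ) : G lam x 0 = 0 := rfl

lemma G_eq_sup' (lam x : E → ℝ) (k : ℕ) (hk : k ≤ Fintype.card E)
    (hne : (Finset.powersetCard k (univ : Finset E)).Nonempty) :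
    G lam x k = (Finset.powersetCard k (univ : Finset E)).sup' hne
      (fun S => ∑ e ∈ S, x e / lam e) := by
  classical
  set f : E → ℝ := fun e => x e / lam e with hf
  set m : Multiset ℝ := univ.val.map f with hm
  have hcoe : ((sortedRatiosDesc lam x : List ℝ) : Multiset ℝ) = m := by
    rw [sortedRatiosDesc_eq]
    exact sortedDesc_coe m
  apply le_antisymm
  · -- achieved by some subset
    set t : Multiset ℝ := (((sortedRatiosDesc lam x).take k : List ℝ) : Multiset ℝ) with htdef
    have htle : t ≤ m := by
      rw [← hcoe]
      exact Multiset.coe_le.mpr (List.take_sublist k _).subperm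
    obtain ⟨u, hu, hmap⟩ := exists_le_of_le_map htle
    have hcardt : Multiset.card t = k := by
      rw [htdef]
      simp only [Multiset.coe_card, List.length_take]
      rw [sortedRatiosDesc_length]
      omega
    have hnodup : u.Nodup := Multiset.nodup_of_le hu (univ : Finset E).nodup
    set S : Finset E := ⟨u, hnodup⟩ with hSdef
    have hmem : S ∈ Finset.powersetCard k (univ : Finset E) := by
      rw [Finset.mem_powersetCard]
      constructor
      · intro e _; exact mem_univ e
      · show Multiset.card u = k
        rw [← hcardt, ← hmap, Multiset.card_map]
    have hsum : ∑ e ∈ S, f e = G lam x k := by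
      have : ∑ e ∈ S, f e = (u.map f).sum := rfl
      rw [this, hmap, htdef]
      exact Multiset.sum_coe _
    calc G lam x k = ∑ e ∈ S, f e := hsum.symm
      _ ≤ _ := Finset.le_sup' (fun S => ∑ e ∈ S, f e) hmem
  · apply Finset.sup'_le
    intro S hS
    obtain ⟨hsub, hcard⟩ := Finset.mem_powersetCard.mp hS
    have h1 : (S.val.map f : Multiset ℝ) ≤ m :=
      Multiset.map_le_map (Finset.val_le_iff.mpr hsub)
    have h2 := sum_le_take (sortedRatiosDesc lam x)
      (by rw [sortedRatiosDesc_eq]; exact sortedDesc_sorted m) (S.val.map f)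
      (by rw [hcoe]; exact h1)
    have h3 : Multiset.card (S.val.map f) = k := by rw [Multiset.card_map]; exact hcard
    rw [h3] at h2
    exact h2

lemma G_continuous (lam x0 : E → ℝ) (k : ℕ) (hk : k ≤ Fintype.card E) :
    Continuous (fun x => G lam x k) := by
  classical
  have hne : (Finset.powersetCard k (univ : Finset E)).Nonempty := by
    rw [Finset.powersetCard_nonempty]
    simpa using hk
  have : (fun x => G lam x k) = fun x => (Finset.powersetCard k (univ : Finset E)).sup' hne
      (fun S => ∑ e ∈ S, x e / lam e) := by
    funext x
    exact G_eq_sup' lam x k hk hne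
  rw [this]
  apply Continuous.finset_sup'_apply hne
    (f := fun S (x : E → ℝ) => ∑ e ∈ S, x e / lam e)
  intro S _
  apply continuous_finset_sum
  intro e _
  exact (continuous_apply e).div_const _

end BalancedFlow

namespace BalancedFlow

variable {V E : Type*} [Fintype V] [DecidableEq V] [Fintype E]

lemma exists_balanced (tail head : E → V) (d : V → ℝ) (lam : E → ℝ)
    (hlam : ∀ e, 0 < lam e) (x0 : E → ℝ) (h0 : WeaklyFeasible tail head d x0) :
    ∃ x, WeaklyFeasible tail head d x ∧ ∀ y, WeaklyFeasible tail head d y →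
      ¬ List.Lex (· < ·) (sortedRatiosDesc lam y) (sortedRatiosDesc lam x) := by
  classical
  set n := Fintype.card E with hn
  set M := ∑ e, x0 e / lam e with hM
  have hrat0 : ∀ e, 0 ≤ x0 e / lam e := fun e => div_nonneg (h0.1 e) (hlam e).le
  have hM0 : ∀ e, x0 e / lam e ≤ M :=
    fun e => Finset.single_le_sum (fun i _ => hrat0 i) (mem_univ e)
  set K := {x : E → ℝ | WeaklyFeasible tail head d x ∧ ∀ e, x e ≤ M * lam e} with hK
  have hx0K : x0 ∈ K := ⟨h0, fun e => (div_le_iff₀ (hlam e)).mp (hM0 e)⟩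
  have hKclosed : IsClosed K := by
    have h1 : K = (⋂ e, {x : E → ℝ | 0 ≤ x e}) ∩
        ((⋂ v, {x : E → ℝ | (∑ e ∈ univ.filter (fun e => tail e = v), x e)
          - (∑ e ∈ univ.filter (fun e => head e = v), x e) = d v}) ∩
         (⋂ e, {x : E → ℝ | x e ≤ M * lam e})) := by
      ext x
      simp only [hK, Set.mem_setOf_eq, Set.mem_inter_iff, Set.mem_iInter, WeaklyFeasible]
      tauto
    rw [h1]
    refine IsClosed.inter ?_ (IsClosed.inter ?_ ?_)
    · exact isClosed_iInter fun e => isClosed_le continuous_const (continuous_apply e)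
    · refine isClosed_iInter fun v => isClosed_eq ?_ continuous_const
      exact ((continuous_finset_sum _ fun e _ => continuous_apply e).sub
        (continuous_finset_sum _ fun e _ => continuous_apply e))
    · exact isClosed_iInter fun e => isClosed_le (continuous_apply e) continuous_const
  have hKsub : K ⊆ Set.Icc (fun _ => (0:ℝ)) (fun e => M * lam e) := by
    intro x hx
    rw [Set.mem_Icc]
    constructor
    · intro e; exact hx.1.1 e
    · intro e; exact hx.2 e
  have hKcomp : IsCompact K := IsCompact.of_isClosed_subset isCompact_Icc hKclosed hKsub
  have seq : ∀ k, k ≤ n → ∃ x, x ∈ K ∧ ∀ y ∈ K, ∀ j, j ≤ k →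
      (∀ i, i < j → G lam y i = G lam x i) → G lam x j ≤ G lam y j := by
    intro k
    induction k with
    | zero =>
      intro _
      refine ⟨x0, hx0K, ?_⟩
      intro y hy j hj hprev
      have hj0 : j = 0 := Nat.le_zero.mp hj
      rw [hj0, G_zero, G_zero]
    | succ k ihk =>
      intro hk1
      obtain ⟨xk, hxkK, hxk⟩ := ihk (by omega)
      set A := {y : E → ℝ | y ∈ K ∧ ∀ i, i ≤ k → G lam y i = G lam xk i} with hA
      have hxkA : xk ∈ A := ⟨hxkK, fun i _ => rfl⟩
      have hAeq : A = K ∩ ⋂ (i : ℕ) (_ : i ≤ k), {y : E → ℝ | G lam y i = G lam xk i} := by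
        ext y
        simp only [hA, Set.mem_setOf_eq, Set.mem_inter_iff, Set.mem_iInter]
      have hAcomp : IsCompact A := by
        rw [hAeq]
        exact hKcomp.inter_right (isClosed_iInter fun i => isClosed_iInter fun hi =>
          isClosed_eq (G_continuous lam x0 i (by omega)) continuous_const)
      obtain ⟨x', hx'A, hminOn⟩ := hAcomp.exists_isMinOn ⟨xk, hxkA⟩
        ((G_continuous lam x0 (k+1) hk1).continuousOn)
      have hmin' : ∀ y ∈ A, G lam x' (k+1) ≤ G lam y (k+1) := fun y hy => hminOn hy
      refine ⟨x', hx'A.1, ?_⟩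
      intro y hy j hj hprev
      have heqk : ∀ i, i ≤ k → G lam x' i = G lam xk i := hx'A.2
      rcases Nat.lt_or_ge j (k+1) with hjk | hjk
      · have hjk' : j ≤ k := by omega
        have hres := hxk y hy j hjk' (fun i hi => (hprev i hi).trans (heqk i (by omega)))
        rw [heqk j hjk']
        exact hres
      · have hj1 : j = k+1 := by omega
        subst hj1
        exact hmin' y ⟨hy, fun i hi => (hprev i (by omega)).trans (heqk i hi)⟩
  obtain ⟨xs, hxsK, hxs⟩ := seq n le_rfl
  refine ⟨xs, hxsK.1, ?_⟩
  intro y hyW hlex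
  have hlen : (sortedRatiosDesc lam y).length = (sortedRatiosDesc lam xs).length := by
    rw [sortedRatiosDesc_length, sortedRatiosDesc_length]
  obtain ⟨p, a, b, t1, t2, e1, e2, hab⟩ := lex_decomp hlex hlen
  have hkey : ∀ i, i ≤ p.length → G lam y i = G lam xs i := by
    intro i hi
    show ((sortedRatiosDesc lam y).take i).sum = ((sortedRatiosDesc lam xs).take i).sum
    rw [e1, e2, List.take_append_of_le_length hi, List.take_append_of_le_length hi]
  have hlen2 : p.length + 1 ≤ n := by
    have hl := sortedRatiosDesc_length lam xs
    rw [e2] at hl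
    simp only [List.length_append, List.length_cons] at hl
    omega
  have hn1 : 1 ≤ n := by omega
  have hne1 : (Finset.powersetCard 1 (univ : Finset E)).Nonempty := by
    rw [Finset.powersetCard_nonempty]
    simpa using hn1
  have hG1 : ∀ z : E → ℝ, ∀ e, z e / lam e ≤ G lam z 1 := by
    intro z e
    rw [G_eq_sup' lam z 1 hn1 hne1]
    have hmem : ({e} : Finset E) ∈ Finset.powersetCard 1 univ :=
      Finset.mem_powersetCard.mpr ⟨Finset.subset_univ _, Finset.card_singleton e⟩
    have := Finset.le_sup' (fun S => ∑ e' ∈ S, z e' / lam e') hmem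
    simpa only [Finset.sum_singleton] using this
  have hG1x0 : G lam x0 1 ≤ M := by
    rw [G_eq_sup' lam x0 1 hn1 hne1]
    apply Finset.sup'_le
    intro S hS
    obtain ⟨e, rfl⟩ := Finset.card_eq_one.mp (Finset.mem_powersetCard.mp hS).2
    simpa using hM0 e
  have hG10 : G lam xs 1 ≤ G lam x0 1 := by
    apply hxs x0 hx0K 1 hn1
    intro i hi
    have hi0 : i = 0 := by omega
    rw [hi0, G_zero, G_zero]
  have hG1yx : G lam y 1 ≤ G lam xs 1 := by
    show ((sortedRatiosDesc lam y).take 1).sum ≤ ((sortedRatiosDesc lam xs).take 1).sum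
    rw [e1, e2]
    cases p with
    | nil => simp; linarith
    | cons c p' => simp
  have hyK : y ∈ K := by
    refine ⟨hyW, fun e => (div_le_iff₀ (hlam e)).mp ?_⟩
    calc y e / lam e ≤ G lam y 1 := hG1 y e
      _ ≤ G lam xs 1 := hG1yx
      _ ≤ G lam x0 1 := hG10
      _ ≤ M := hG1x0
  have hfin := hxs y hyK (p.length + 1) hlen2 (fun i hi => hkey i (by omega))
  have hGy : G lam y (p.length + 1) = p.sum + a := by
    show ((sortedRatiosDesc lam y).take (p.length+1)).sum = _
    rw [e1, List.take_length_add_append 1]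
    simp
  have hGxs : G lam xs (p.length + 1) = p.sum + b := by
    show ((sortedRatiosDesc lam xs).take (p.length+1)).sum = _
    rw [e2, List.take_length_add_append 1]
    simp
  rw [hGy, hGxs] at hfin
  linarith

end BalancedFlow

open BalancedFlow in
theorem balanced_flow_unique
    {V E : Type*} [Fintype V] [DecidableEq V] [Fintype E]
    (tail head : E → V) (d : V → ℝ) (lam : E → ℝ)
    (hd : ∑ v, d v = 0) (hlam : ∀ e, 0 < lam e)
    (hnf : NoFatalCut tail head d) :
    ∃! x : E → ℝ, WeaklyFeasible tail head d x ∧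
      ∀ y : E → ℝ, WeaklyFeasible tail head d y →
        ¬ List.Lex (· < ·) (sortedRatiosDesc lam y) (sortedRatiosDesc lam x) := by

  classical
  obtain ⟨x0, h0⟩ := feasible_exists tail head d hd hnf
  obtain ⟨xs, hxsW, hxsMin⟩ := exists_balanced tail head d lam hlam x0 h0
  refine ⟨xs, ⟨hxsW, hxsMin⟩, ?_⟩
  rintro y ⟨hyW, hyMin⟩
  by_contra hne
  have hLeq : sortedRatiosDesc lam y = sortedRatiosDesc lam xs :=
    lex_total _ _ (by rw [sortedRatiosDesc_length, sortedRatiosDesc_length])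
      (hxsMin y hyW) (hyMin xs hxsW)
  have hmeq : univ.val.map (fun e => y e / lam e) = univ.val.map (fun e => xs e / lam e) := by
    have h := congrArg (fun l : List ℝ => (l : Multiset ℝ)) hLeq
    simp only [sortedRatiosDesc_eq, sortedDesc_coe] at h
    exact h
  set z : E → ℝ := fun e => (y e + xs e) / 2 with hz
  have hzW : WeaklyFeasible tail head d z := by
    constructor
    · intro e
      have h1 := hyW.1 e
      have h2 := hxsW.1 e
      simp only [hz]
      linarith
    · intro v
      have hy2 := hyW.2 v
      have hx2 := hxsW.2 v
      show (∑ e ∈ univ.filter (fun e => tail e = v), (y e + xs e) / 2)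
        - (∑ e ∈ univ.filter (fun e => head e = v), (y e + xs e) / 2) = d v
      rw [← Finset.sum_div, ← Finset.sum_div, Finset.sum_add_distrib, Finset.sum_add_distrib]
      linarith
  set P : Multiset (ℝ × ℝ) := univ.val.map (fun e => (xs e / lam e, y e / lam e)) with hP
  have hPfst : P.map Prod.fst = univ.val.map (fun e => xs e / lam e) := by
    rw [hP, Multiset.map_map]
    rfl
  have hPsnd : P.map Prod.snd = univ.val.map (fun e => y e / lam e) := by
    rw [hP, Multiset.map_map]
    rfl
  have hPeq : P.map Prod.fst = P.map Prod.snd := by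
    rw [hPfst, hPsnd]
    exact hmeq.symm
  have hPne : ∃ pr ∈ P, pr.1 ≠ pr.2 := by
    have hex : ∃ e, y e ≠ xs e := by
      by_contra h
      push_neg at h
      exact hne (funext h)
    obtain ⟨e, he⟩ := hex
    refine ⟨(xs e / lam e, y e / lam e),
      Multiset.mem_map_of_mem _ (Finset.mem_val.mpr (mem_univ e)), ?_⟩
    intro hc
    simp only at hc
    have := congrArg (fun t => t * lam e) hc
    simp only [div_mul_cancel₀ _ (ne_of_gt (hlam e))] at this
    exact he this.symm
  have hlexz := avg_lex P hPeq hPne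
  have hz1 : P.map (fun pr => (pr.1 + pr.2) / 2) = univ.val.map (fun e => z e / lam e) := by
    rw [hP, Multiset.map_map]
    apply Multiset.map_congr rfl
    intro e _
    show (xs e / lam e + y e / lam e) / 2 = (y e + xs e) / 2 / lam e
    field_simp
    ring
  rw [hz1, hPfst] at hlexz
  exact hxsMin z hzW (by rw [sortedRatiosDesc_eq, sortedRatiosDesc_eq]; exact hlexz)
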